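/- arXiv:2312.03564 — 2 statements merged into one kernel-verified Lean document; each statement's English description precedes it below -/
import Mathlib

section
/- For every n ≥ 1, the maximum number of entries equal to −1 over all n×n alternating sign matrices equals ⌊(n−1)/2⌋·⌈(n−1)/2⌉, and the maximum number of entries equal to −1 over all n×n magog matrices also equals ⌊(n−1)/2⌋·⌈(n−1)/2⌉. -/
/-- An `n × n` square sign matrix: a `{0, 1, -1}`-matrix whose rows and columns
all sum to 1, whose partial column sums lie in `{0, 1}`, and whose partial row
sums are nonnegative. -/
def IsSquareSign (n : ℕ) (A : Fin n → Fin n → ℤ) : Prop :=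
  (∀ i j, A i j = -1 ∨ A i j = 0 ∨ A i j = 1) ∧
  (∀ j, ∑ i, A i j = 1) ∧
  (∀ i, ∑ j, A i j = 1) ∧
  (∀ i j : Fin n, 0 ≤ ∑ i' ∈ Finset.Iic i, A i' j ∧ ∑ i' ∈ Finset.Iic i, A i' j ≤ 1) ∧
  (∀ i j : Fin n, 0 ≤ ∑ j' ∈ Finset.Iic j, A i j')

/-- An `n × n` magog matrix: a square sign matrix satisfying the
`(i,j)`-special inequalities (stated here with 0-based indices `i, j`,
corresponding to the paper's 1-based `i+1, j+1` with `1 ≤ i, j ≤ n-2`). -/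
def IsMagog (n : ℕ) (A : Fin n → Fin n → ℤ) : Prop :=
  IsSquareSign n A ∧
  ∀ (i j : ℕ) (hi : i + 2 < n) (hj : j + 2 < n),
    0 ≤ (∑ j' ∈ Finset.Iic (⟨j, by omega⟩ : Fin n), A ⟨i + 1, by omega⟩ j')
      + (∑ i' ∈ Finset.Iic (⟨i + 1, by omega⟩ : Fin n), A i' ⟨j + 1, by omega⟩)
      - (∑ i' ∈ Finset.Iic (⟨i, by omega⟩ : Fin n), A i' ⟨j, by omega⟩)

/-- An `n × n` alternating sign matrix: a square sign matrix whose partial row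
sums are also at most `1`. -/
def IsASM (n : ℕ) (A : Fin n → Fin n → ℤ) : Prop :=
  IsSquareSign n A ∧ ∀ i j : Fin n, ∑ j' ∈ Finset.Iic j, A i j' ≤ 1

/-- The number of entries of `A` equal to `-1`. -/
def negCount (n : ℕ) (A : Fin n → Fin n → ℤ) : ℕ :=
  (Finset.univ.filter (fun p : Fin n × Fin n => A p.1 p.2 = -1)).card

/-!
Row `i` of a square sign matrix contains at most `min i (n - 1 - i)` entries `-1`: a `-1` at
`(i, j)` forces the partial sum of column `j` to be `1` above row `i` and `0` through row `i`,
and since every row sums to `1`, exactly `i` columns have the first property and `n - 1 - i` the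
second. Summing over the rows gives `⌊(n-1)/2⌋ ⌈(n-1)/2⌉`.

The bound is attained by a symmetric checkerboard diamond whose row `i` reads
`+1, -1, …, -1, +1` with exactly `min i (n - 1 - i)` entries `-1`. All its partial row sums, and by
symmetry all its partial column sums, are `0` or `1`, so it is an alternating sign matrix, and
the special inequalities become a finite case check on these partial sums.
-/

open Finset

lemma natCast_card_filter_eq_one {ι : Type*} {s : Finset ι} {f : ι → ℤ}
    (hf : ∀ x ∈ s, f x = 0 ∨ f x = 1) : (#{x ∈ s | f x = 1} : ℤ) = ∑ x ∈ s, f x := by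
  rw [natCast_card_filter]
  refine sum_congr rfl fun x hx => ?_
  rcases hf x hx with h | h <;> simp [h]

lemma Fin.sum_Iic_val_eq_sum_range {M : Type*} [AddCommMonoid M] {n : ℕ} (f : ℕ → M)
    (j : Fin n) : ∑ x ∈ Iic j, f x = ∑ k ∈ range (j + 1), f k := by
  rw [Nat.range_succ_eq_Iic, ← Fin.map_valEmbedding_Iic, sum_map]
  rfl

lemma Fin.card_filter_val_eq_card_filter_range {n : ℕ} (p : ℕ → Prop) [DecidablePred p] :
    #{j : Fin n | p j} = #{k ∈ range n | p k} := by
  rw [card_filter, card_filter, Fin.sum_univ_eq_sum_range fun k => if p k then 1 else 0]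

lemma sum_range_min_sub (n : ℕ) : ∑ i ∈ range n, min i (n - 1 - i) = (n - 1) / 2 * (n / 2) := by
  induction n with
  | zero => rfl
  | succ n ih =>
    have hstep : ∀ i ∈ range n,
        min i (n - i) = min i (n - 1 - i) + if n ≤ 2 * i then 1 else 0 := by
      intro i hi
      rw [mem_range] at hi
      split_ifs <;> omega
    have hcount : ∑ i ∈ range n, (if n ≤ 2 * i then 1 else 0) = n / 2 := by
      have : {i ∈ range n | n ≤ 2 * i} = Ico ((n + 1) / 2) n := by
        ext i
        simp only [mem_filter, mem_range, mem_Ico]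
        omega
      rw [← card_filter, this, Nat.card_Ico]
      omega
    rw [sum_range_succ, Nat.add_sub_cancel, Nat.sub_self, Nat.min_zero, add_zero,
      sum_congr rfl hstep, sum_add_distrib, ih, hcount]
    rcases Nat.even_or_odd' n with ⟨m, rfl | rfl⟩
    · rcases m with _ | m
      · rfl
      · rw [show (2 * (m + 1) - 1) / 2 = m by omega, show 2 * (m + 1) / 2 = m + 1 by omega,
          show (2 * (m + 1) + 1) / 2 = m + 1 by omega]
        ring
    · rw [show (2 * m + 1 - 1) / 2 = m by omega, show (2 * m + 1) / 2 = m by omega,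
        show (2 * m + 1 + 1) / 2 = m + 1 by omega]
      ring

lemma negCount_eq_sum_card_row (n : ℕ) (A : Fin n → Fin n → ℤ) :
    negCount n A = ∑ i, #{j | A i j = -1} := by
  simp only [negCount, card_filter, Fintype.sum_prod_type]

namespace IsSquareSign

variable {n : ℕ} {A : Fin n → Fin n → ℤ}

lemma sum_Iic_col_eq_zero_or_one (hA : IsSquareSign n A) (i j : Fin n) :
    ∑ i' ∈ Iic i, A i' j = 0 ∨ ∑ i' ∈ Iic i, A i' j = 1 := by
  have := hA.2.2.2.1 i j
  omega

lemma sum_Iio_col_eq_zero_or_one (hA : IsSquareSign n A) (i j : Fin n) :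
    ∑ i' ∈ Iio i, A i' j = 0 ∨ ∑ i' ∈ Iio i, A i' j = 1 := by
  rcases Nat.eq_zero_or_pos i with hi | hi
  · left
    have : Iio i = ∅ := eq_empty_of_forall_notMem fun k hk => by
      rw [mem_Iio, Fin.lt_def] at hk
      omega
    rw [this, sum_empty]
  · have : Iio i = Iic ⟨i - 1, by omega⟩ := by
      ext k
      simp only [mem_Iio, mem_Iic, Fin.lt_def, Fin.le_def]
      omega
    rw [this]
    exact hA.sum_Iic_col_eq_zero_or_one _ j

lemma sum_sum_Iio_col (hA : IsSquareSign n A) (i : Fin n) :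
    ∑ j, ∑ i' ∈ Iio i, A i' j = i := by
  rw [sum_comm, sum_congr rfl fun i' _ => hA.2.2.1 i', sum_const, Fin.card_Iio, nsmul_one]

lemma sum_sum_Iic_col (hA : IsSquareSign n A) (i : Fin n) :
    ∑ j, ∑ i' ∈ Iic i, A i' j = i + 1 := by
  rw [sum_comm, sum_congr rfl fun i' _ => hA.2.2.1 i', sum_const, Fin.card_Iic, nsmul_one]
  push_cast
  rfl

lemma card_row_neg_one_le (hA : IsSquareSign n A) (i : Fin n) :
    #{j | A i j = -1} ≤ min (i : ℕ) (n - 1 - i) := by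
  have hsplit : ∀ j, ∑ i' ∈ Iic i, A i' j = ∑ i' ∈ Iio i, A i' j + A i j := fun j => by
    rw [← Iio_insert, sum_insert (by simp), add_comm]
  have hdrop : ∀ j, A i j = -1 →
      ∑ i' ∈ Iio i, A i' j = 1 ∧ ∑ i' ∈ Iic i, A i' j = 0 := fun j hj => by
    have h1 := hA.sum_Iio_col_eq_zero_or_one i j
    have h2 := hA.sum_Iic_col_eq_zero_or_one i j
    have := hsplit j
    omega
  have habove : (#{j | ∑ i' ∈ Iio i, A i' j = 1} : ℤ) = i := by
    rw [natCast_card_filter_eq_one fun j _ => hA.sum_Iio_col_eq_zero_or_one i j,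
      hA.sum_sum_Iio_col]
  have hthrough : #{j | ∑ i' ∈ Iic i, A i' j = 0} + (i + 1) = n := by
    have h := natCast_card_filter_eq_one (s := univ) fun j _ =>
      hA.sum_Iic_col_eq_zero_or_one i j
    rw [hA.sum_sum_Iic_col] at h
    have hcard := card_filter_add_card_filter_not (s := univ) fun j =>
      ∑ i' ∈ Iic i, A i' j = 0
    rw [card_univ, Fintype.card_fin] at hcard
    have hnot : univ.filter (fun j : Fin n => ¬∑ i' ∈ Iic i, A i' j = 0) =
        univ.filter (fun j : Fin n => ∑ i' ∈ Iic i, A i' j = 1) := by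
      refine filter_congr fun j _ => ?_
      have := hA.sum_Iic_col_eq_zero_or_one i j
      omega
    rw [hnot] at hcard
    omega
  have h1 := card_le_card (monotone_filter_right univ fun j _ hj => (hdrop j hj).1)
  have h2 := card_le_card (monotone_filter_right univ fun j _ hj => (hdrop j hj).2)
  omega

lemma negCount_le (hA : IsSquareSign n A) : negCount n A ≤ (n - 1) / 2 * (n / 2) := by
  rw [negCount_eq_sum_card_row, ← sum_range_min_sub, ← Fin.sum_univ_eq_sum_range]
  exact sum_le_sum fun i _ => hA.card_row_neg_one_le i

end IsSquareSign

def alternating (a l j : ℕ) : ℤ :=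
  if a ≤ j ∧ j ≤ a + 2 * l then if (j - a) % 2 = 0 then 1 else -1 else 0

def alternatingPartial (a l j : ℕ) : ℤ :=
  if a ≤ j ∧ ((j - a) % 2 = 0 ∨ a + 2 * l ≤ j) then 1 else 0

lemma sum_range_alternating (a l j : ℕ) :
    ∑ k ∈ range (j + 1), alternating a l k = alternatingPartial a l j := by
  induction j with
  | zero =>
    simp only [zero_add, sum_range_one, alternating, alternatingPartial]
    split_ifs <;> omega
  | succ j ih =>
    rw [sum_range_succ, ih]
    simp only [alternating, alternatingPartial]
    split_ifs <;> omega

lemma alternatingPartial_eq_zero_or_one (a l j : ℕ) :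
    alternatingPartial a l j = 0 ∨ alternatingPartial a l j = 1 := by
  unfold alternatingPartial
  split_ifs <;> simp

lemma card_filter_alternating_eq_neg_one {a l N : ℕ} (h : a + 2 * l < N) :
    #{k ∈ range N | alternating a l k = -1} = l := by
  have : {k ∈ range N | alternating a l k = -1} = (range l).image fun t => a + 2 * t + 1 := by
    ext k
    rw [mem_filter, mem_image]
    simp only [mem_range, alternating]
    constructor
    · rintro ⟨-, hk⟩
      split_ifs at hk
      exact ⟨(k - a) / 2, by omega, by omega⟩
    · rintro ⟨t, ht, rfl⟩
      split_ifs <;> omega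
  rw [this, card_image_of_injective _ fun s t hst => by omega, card_range]

/-- Row `i` is the alternating sequence on the columns `|m - i|, …, n - 1 - |⌊n/2⌋ - i|` with
`m = ⌊(n-1)/2⌋`; these intervals stack into a diamond, filled with a checkerboard. -/
def diamond (n : ℕ) (i j : Fin n) : ℤ :=
  alternating (Nat.dist ((n - 1) / 2) i) (min i (n - 1 - i)) j

lemma diamond_symm (n : ℕ) (i j : Fin n) : diamond n i j = diamond n j i := by
  have := i.isLt
  have := j.isLt
  unfold diamond alternating
  by_cases hs : Nat.dist ((n - 1) / 2) i ≤ j ∧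
      j ≤ Nat.dist ((n - 1) / 2) i + 2 * min (i : ℕ) (n - 1 - i)
  · have hs' : Nat.dist ((n - 1) / 2) j ≤ i ∧
        i ≤ Nat.dist ((n - 1) / 2) j + 2 * min (j : ℕ) (n - 1 - j) := by
      unfold Nat.dist at *
      omega
    have hpar : (j - Nat.dist ((n - 1) / 2) i) % 2 = 0 ↔
        (i - Nat.dist ((n - 1) / 2) j) % 2 = 0 := by
      unfold Nat.dist at *
      omega
    simp only [if_pos hs, if_pos hs', hpar]
  · rw [if_neg hs, if_neg (by unfold Nat.dist at *; omega)]

lemma sum_Iic_diamond (n : ℕ) (i j : Fin n) :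
    ∑ j' ∈ Iic j, diamond n i j' =
      alternatingPartial (Nat.dist ((n - 1) / 2) i) (min i (n - 1 - i)) j :=
  (Fin.sum_Iic_val_eq_sum_range _ j).trans (sum_range_alternating _ _ _)

lemma sum_diamond (n : ℕ) (i : Fin n) : ∑ j, diamond n i j = 1 := by
  have := i.isLt
  obtain ⟨m, rfl⟩ : ∃ m, n = m + 1 := ⟨n - 1, by omega⟩
  rw [← Iic_top, sum_Iic_diamond]
  simp only [alternatingPartial, Nat.dist, Fin.val_top]
  split_ifs <;> omega

lemma alternatingPartial_diamond_special {n i j : ℕ} (hi : i + 2 < n) (hj : j + 2 < n) :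
    0 ≤ alternatingPartial (Nat.dist ((n - 1) / 2) (i + 1)) (min (i + 1) (n - 1 - (i + 1))) j +
      alternatingPartial (Nat.dist ((n - 1) / 2) (j + 1)) (min (j + 1) (n - 1 - (j + 1))) (i + 1) -
      alternatingPartial (Nat.dist ((n - 1) / 2) j) (min j (n - 1 - j)) i := by
  simp only [alternatingPartial, Nat.dist]
  split_ifs <;> omega

lemma sum_Iic_diamond_col (n : ℕ) (i j : Fin n) :
    ∑ i' ∈ Iic i, diamond n i' j =
      alternatingPartial (Nat.dist ((n - 1) / 2) j) (min j (n - 1 - j)) i := by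
  rw [← sum_Iic_diamond]
  exact sum_congr rfl fun i' _ => diamond_symm n i' j

lemma isASM_diamond (n : ℕ) : IsASM n (diamond n) := by
  have hpartial (i j : Fin n) := alternatingPartial_eq_zero_or_one
    (Nat.dist ((n - 1) / 2) i) (min i (n - 1 - i)) j
  refine ⟨⟨fun i j => ?_, fun j => ?_, sum_diamond n, fun i j => ?_, fun i j => ?_⟩,
    fun i j => ?_⟩
  · unfold diamond alternating
    split_ifs <;> simp
  · rw [← sum_diamond n j]
    exact sum_congr rfl fun i _ => diamond_symm n i j
  · rw [sum_Iic_diamond_col]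
    have := hpartial j i
    omega
  · rw [sum_Iic_diamond]
    have := hpartial i j
    omega
  · rw [sum_Iic_diamond]
    have := hpartial i j
    omega

lemma isMagog_diamond (n : ℕ) : IsMagog n (diamond n) := by
  refine ⟨(isASM_diamond n).1, fun i j hi hj => ?_⟩
  rw [sum_Iic_diamond, sum_Iic_diamond_col, sum_Iic_diamond_col]
  exact alternatingPartial_diamond_special hi hj

lemma negCount_diamond (n : ℕ) : negCount n (diamond n) = (n - 1) / 2 * (n / 2) := by
  rw [negCount_eq_sum_card_row, ← sum_range_min_sub, ← Fin.sum_univ_eq_sum_range]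
  refine sum_congr rfl fun i _ => ?_
  have hlast : Nat.dist ((n - 1) / 2) i + 2 * min (i : ℕ) (n - 1 - i) < n := by
    have := i.isLt
    unfold Nat.dist
    omega
  exact (Fin.card_filter_val_eq_card_filter_range _).trans
    (card_filter_alternating_eq_neg_one hlast)

theorem max_negOnes_ASM_and_magog_general (n : ℕ) :
    IsGreatest {k : ℕ | ∃ A : Fin n → Fin n → ℤ, IsASM n A ∧ negCount n A = k}
      ((n - 1) / 2 * (n / 2)) ∧
    IsGreatest {k : ℕ | ∃ A : Fin n → Fin n → ℤ, IsMagog n A ∧ negCount n A = k}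
      ((n - 1) / 2 * (n / 2)) := by
  refine ⟨⟨⟨diamond n, isASM_diamond n, negCount_diamond n⟩, ?_⟩,
    ⟨⟨diamond n, isMagog_diamond n, negCount_diamond n⟩, ?_⟩⟩
  · rintro _ ⟨A, hA, rfl⟩
    exact hA.1.negCount_le
  · rintro _ ⟨A, hA, rfl⟩
    exact hA.1.negCount_le

/-- The maximum number of `-1` entries over all `n × n` ASMs, and over all
`n × n` magog matrices, both equal `⌊(n-1)/2⌋ * ⌈(n-1)/2⌉`. -/
theorem max_negOnes_ASM_and_magog (n : ℕ) (hn : 0 < n) :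
    IsGreatest {k : ℕ | ∃ A : Fin n → Fin n → ℤ, IsASM n A ∧ negCount n A = k}
      ((n - 1) / 2 * (n / 2)) ∧
    IsGreatest {k : ℕ | ∃ A : Fin n → Fin n → ℤ, IsMagog n A ∧ negCount n A = k}
      ((n - 1) / 2 * (n / 2)) :=
  max_negOnes_ASM_and_magog_general n
end

section
/- For every n ≥ 1, the number of n×n magog matrices whose first-column 1 lies in the first or second row (i.e. with a_{11} = 1 or a_{21} = 1) equals the n-th Catalan number (1/(n+1))·C(2n,n). -/
/-!
Write `P k j` for the sum of the first `k` entries of column `j`. If the first-column one of a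
magog matrix lies in row 1 or 2, the special inequalities force, row by row, that `P (k + 1)` is
the indicator of `{j | j < k} ∪ {c k}` for a single column `c k ≥ k`; the special inequality at
`(k, c k)` then gives `c (k + 1) ≤ c k + 1`, and conversely every such staircase `c` comes from a
magog matrix. Read backwards, the offsets `c k - k` are the weakly increasing sequences `f` with
`f k ≤ k`, and the first-return decomposition shows that these satisfy the Catalan recursion.
-/

open Finset

def IsBallot (n : ℕ) (f : ℕ → ℕ) : Prop :=
  MonotoneOn f (Set.Iio n) ∧ (∀ k < n, f k ≤ k) ∧ ∀ k, n ≤ k → f k = 0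

abbrev Ballot (n : ℕ) := {f : ℕ → ℕ // IsBallot n f}

instance (n : ℕ) : Finite (Ballot n) := by
  refine Finite.of_injective
    (fun (f : Ballot n) (i : Fin n) => (⟨f.1 i, (f.2.2.1 i i.2).trans_lt i.2⟩ : Fin n)) ?_
  intro f g hfg
  ext k
  rcases lt_or_ge k n with hk | hk
  · simpa using congrFun hfg ⟨k, hk⟩
  · rw [f.2.2.2 k hk, g.2.2.2 k hk]

instance : Unique (Ballot 0) where
  default := ⟨0, fun _ h => absurd h (Nat.not_lt_zero _), fun _ h => absurd h (Nat.not_lt_zero _),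
    fun _ _ => rfl⟩
  uniq f := Subtype.ext <| funext fun k => f.2.2.2 k k.zero_le

namespace Ballot

variable {n s : ℕ} {f g h : ℕ → ℕ}

/-- Inverse of the first-return decomposition `f ↦ (firstReturn n f, left n f, right n f)`. -/
def glue (n s : ℕ) (g h : ℕ → ℕ) (k : ℕ) : ℕ :=
  if k = 0 then 0 else if k ≤ s then g (k - 1) else if k ≤ n then s + 1 + h (k - s - 1) else 0

theorem glue_le (hs : s ≤ n) (hg : IsBallot s g) (hh : IsBallot (n - s) h) {k : ℕ}
    (hk : k < n + 1) : glue n s g h k ≤ k := by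
  unfold glue
  split_ifs
  · omega
  · have := hg.2.1 (k - 1) (by omega); omega
  · have := hh.2.1 (k - s - 1) (by omega); omega
  · omega

theorem glue_isBallot (hs : s ≤ n) (hg : IsBallot s g) (hh : IsBallot (n - s) h) :
    IsBallot (n + 1) (glue n s g h) := by
  refine ⟨fun i (hi : i < n + 1) j (hj : j < n + 1) hij => ?_, fun k hk => glue_le hs hg hh hk,
    fun k hk => by unfold glue; split_ifs <;> omega⟩
  have hgi := glue_le hs hg hh hi
  unfold glue at hgi ⊢
  split_ifs at hgi ⊢ <;> try omega
  · exact hg.1 (show i - 1 < s by omega) (show j - 1 < s by omega) (by omega)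
  · have := hh.1 (show i - s - 1 < n - s by omega) (show j - s - 1 < n - s by omega) (by omega)
    omega

def firstReturn (n : ℕ) (f : ℕ → ℕ) : ℕ :=
  Nat.find (⟨n, Or.inl le_rfl⟩ : ∃ k, n ≤ k ∨ f (k + 1) = k + 1)

theorem firstReturn_le : firstReturn n f ≤ n := Nat.find_min' _ (Or.inl le_rfl)

theorem firstReturn_spec (h : firstReturn n f < n) :
    f (firstReturn n f + 1) = firstReturn n f + 1 :=
  (Nat.find_spec (⟨n, Or.inl le_rfl⟩ : ∃ k, n ≤ k ∨ f (k + 1) = k + 1)).resolve_left (by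
    unfold firstReturn at h; omega)

theorem ne_of_lt_firstReturn {k : ℕ} (hk : k < firstReturn n f) : f (k + 1) ≠ k + 1 :=
  fun h => Nat.find_min _ hk (Or.inr h)

def left (n : ℕ) (f : ℕ → ℕ) (k : ℕ) : ℕ :=
  if k < firstReturn n f then f (k + 1) else 0

def right (n : ℕ) (f : ℕ → ℕ) (k : ℕ) : ℕ :=
  if k < n - firstReturn n f then f (firstReturn n f + 1 + k) - (firstReturn n f + 1) else 0

theorem left_isBallot (hf : IsBallot (n + 1) f) : IsBallot (firstReturn n f) (left n f) := by
  have := firstReturn_le (n := n) (f := f)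
  refine ⟨fun i (hi : i < _) j (hj : j < _) hij => ?_, fun k hk => ?_, fun k hk => ?_⟩
  · simp only [left, if_pos hi, if_pos hj]
    exact hf.1 (show i + 1 < n + 1 by omega) (show j + 1 < n + 1 by omega) (by omega)
  · have h1 := hf.2.1 (k + 1) (by omega)
    have h2 := ne_of_lt_firstReturn hk
    simp only [left, if_pos hk]
    omega
  · unfold left; rw [if_neg (by omega)]

theorem right_isBallot (hf : IsBallot (n + 1) f) :
    IsBallot (n - firstReturn n f) (right n f) := by
  have := firstReturn_le (n := n) (f := f)
  refine ⟨fun i (hi : i < _) j (hj : j < _) hij => ?_, fun k hk => ?_, fun k hk => ?_⟩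
  · simp only [right, if_pos hi, if_pos hj]
    exact Nat.sub_le_sub_right (hf.1 (show _ < n + 1 by omega) (show _ < n + 1 by omega)
      (by omega)) _
  · have := hf.2.1 (firstReturn n f + 1 + k) (by omega)
    simp only [right, if_pos hk]
    omega
  · unfold right; rw [if_neg (by omega)]

theorem glue_left_right (hf : IsBallot (n + 1) f) :
    glue n (firstReturn n f) (left n f) (right n f) = f := by
  have := firstReturn_le (n := n) (f := f)
  funext k
  unfold glue
  split_ifs with h0 h1 h2
  · subst h0; have := hf.2.1 0 (by omega); omega
  · unfold left; rw [if_pos (by omega)]; congr 1; omega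
  · unfold right
    rw [if_pos (by omega)]
    have hret := firstReturn_spec (show firstReturn n f < n by omega)
    have hmono := hf.1 (show firstReturn n f + 1 < n + 1 by omega) (show k < n + 1 by omega)
      (by omega)
    rw [show firstReturn n f + 1 + (k - firstReturn n f - 1) = k by omega]
    omega
  · exact (hf.2.2 k (by omega)).symm

theorem firstReturn_glue (hs : s ≤ n) (hg : IsBallot s g) (hh : IsBallot (n - s) h) :
    firstReturn n (glue n s g h) = s := by
  refine le_antisymm (Nat.find_min' _ ?_) ((Nat.le_find_iff _ _).2 fun m hm => ?_)
  · rcases hs.eq_or_lt with rfl | hsn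
    · exact Or.inl le_rfl
    · have := hh.2.1 0 (by omega)
      refine Or.inr ?_
      unfold glue
      rw [if_neg (by omega), if_neg (by omega), if_pos (by omega),
        show s + 1 - s - 1 = 0 by omega]
      omega
  · have := hg.2.1 m hm
    unfold glue
    rw [if_neg (by omega), if_pos (by omega), Nat.add_sub_cancel]
    omega

theorem left_glue (hs : s ≤ n) (hg : IsBallot s g) (hh : IsBallot (n - s) h) :
    left n (glue n s g h) = g := by
  funext k
  unfold left
  rw [firstReturn_glue hs hg hh]
  split_ifs with hk
  · unfold glue
    rw [if_neg (by omega), if_pos (by omega), Nat.add_sub_cancel]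
  · exact (hg.2.2 k (by omega)).symm

theorem right_glue (hs : s ≤ n) (hg : IsBallot s g) (hh : IsBallot (n - s) h) :
    right n (glue n s g h) = h := by
  funext k
  unfold right
  rw [firstReturn_glue hs hg hh]
  split_ifs with hk
  · unfold glue
    rw [if_neg (by omega), if_neg (by omega), if_pos (by omega),
      show s + 1 + k - s - 1 = k by omega]
    omega
  · exact (hh.2.2 k (by omega)).symm

theorem bijective_glue (n : ℕ) :
    Function.Bijective fun x : Σ s : Fin (n + 1), Ballot s × Ballot (n - s) =>
      (⟨glue n x.1 x.2.1 x.2.2, glue_isBallot (Nat.lt_succ_iff.mp x.1.2) x.2.1.2 x.2.2.2⟩ :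
        Ballot (n + 1)) := by
  constructor
  · rintro ⟨s, ⟨g, hg⟩, ⟨h, hh⟩⟩ ⟨s', ⟨g', hg'⟩, ⟨h', hh'⟩⟩ heq
    have hv : glue n s g h = glue n s' g' h' := congrArg Subtype.val heq
    have hs := Nat.lt_succ_iff.mp s.2
    have hs' := Nat.lt_succ_iff.mp s'.2
    obtain rfl : s = s' := Fin.ext <| by
      rw [← firstReturn_glue hs hg hh, hv, firstReturn_glue hs' hg' hh']
    obtain rfl : g = g' := by rw [← left_glue hs hg hh, hv, left_glue hs hg' hh']
    obtain rfl : h = h' := by rw [← right_glue hs hg hh, hv, right_glue hs hg' hh']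
    rfl
  · intro f
    exact ⟨⟨⟨firstReturn n f, Nat.lt_succ_of_le firstReturn_le⟩, ⟨_, left_isBallot f.2⟩,
      ⟨_, right_isBallot f.2⟩⟩, Subtype.ext (glue_left_right f.2)⟩

end Ballot

theorem card_ballot (n : ℕ) : Nat.card (Ballot n) = catalan n := by
  induction n using Nat.strong_induction_on with
  | _ n ih =>
    match n with
    | 0 => simp
    | m + 1 =>
      have : ∀ k, Fintype (Ballot k) := fun k => Fintype.ofFinite _
      rw [← Nat.card_eq_of_bijective _ (Ballot.bijective_glue m), Nat.card_eq_fintype_card,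
        Fintype.card_sigma, catalan_succ]
      refine Finset.sum_congr rfl fun s _ => ?_
      rw [Fintype.card_prod, ← Nat.card_eq_fintype_card, ← Nat.card_eq_fintype_card,
        ih s (by omega), ih (m - s) (by omega)]

theorem Fin.sum_Iic_eq_sum_range {M : Type*} [AddCommMonoid M] {n : ℕ} (F : ℕ → M)
    (i : Fin n) :
    ∑ x ∈ Iic i, F x = ∑ k ∈ range (i + 1), F k := by
  rw [Nat.range_succ_eq_Iic, ← Fin.map_valEmbedding_Iic, sum_map]
  rfl

theorem Finset.eq_one_of_card_le_sum {ι : Type*} {s : Finset ι} {f : ι → ℤ}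
    (hle : ∀ i ∈ s, f i ≤ 1) (hsum : (#s : ℤ) ≤ ∑ i ∈ s, f i) : ∀ i ∈ s, f i = 1 := by
  have hall : ∑ i ∈ s, f i = ∑ _i ∈ s, (1 : ℤ) :=
    le_antisymm (sum_le_sum hle) (by simpa using hsum)
  exact (sum_eq_sum_iff_of_le hle).1 hall

section ColPartialSums

variable {n : ℕ} {P : ℕ → ℕ → ℤ}

def rowPrefix (P : ℕ → ℕ → ℤ) (k m : ℕ) : ℤ := ∑ t ∈ range m, P k t

theorem rowPrefix_succ (k m : ℕ) : rowPrefix P k (m + 1) = rowPrefix P k m + P k m :=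
  sum_range_succ _ _

theorem rowPrefix_eq_of_eq_one {k m : ℕ} (h : ∀ t < m, P k t = 1) :
    rowPrefix P k m = m := by
  rw [rowPrefix, sum_congr rfl fun t ht => h t (mem_range.1 ht)]
  simp

def ofColPartialSums (n : ℕ) (P : ℕ → ℕ → ℤ) : Fin n → Fin n → ℤ :=
  fun i j => P (i + 1) j - P i j

def colPartialSums (A : Fin n → Fin n → ℤ) (k j : ℕ) : ℤ :=
  ∑ t ∈ range k, if h : t < n ∧ j < n then A ⟨t, h.1⟩ ⟨j, h.2⟩ else 0

theorem colPartialSums_zero (A : Fin n → Fin n → ℤ) (j : ℕ) : colPartialSums A 0 j = 0 :=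
  sum_range_zero _

theorem ofColPartialSums_colPartialSums (A : Fin n → Fin n → ℤ) :
    ofColPartialSums n (colPartialSums A) = A := by
  funext i j
  simp [ofColPartialSums, colPartialSums, sum_range_succ]

theorem ofColPartialSums_congr {P' : ℕ → ℕ → ℤ} (h : ∀ k ≤ n, ∀ j < n, P k j = P' k j) :
    ofColPartialSums n P = ofColPartialSums n P' := by
  funext i j
  simp only [ofColPartialSums, h (i + 1) i.2 j j.2, h i i.2.le j j.2]

section

variable (hP0 : ∀ j, P 0 j = 0)
include hP0

theorem sum_Iic_ofColPartialSums_col (i j : Fin n) :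
    ∑ i' ∈ Iic i, ofColPartialSums n P i' j = P (i + 1) j := by
  unfold ofColPartialSums
  rw [Fin.sum_Iic_eq_sum_range (fun t => P (t + 1) j - P t j), sum_range_sub (fun t => P t j),
    hP0, sub_zero]

theorem sum_ofColPartialSums_col (j : Fin n) :
    ∑ i, ofColPartialSums n P i j = P n j := by
  unfold ofColPartialSums
  rw [Fin.sum_univ_eq_sum_range (fun t => P (t + 1) j - P t j), sum_range_sub (fun t => P t j),
    hP0, sub_zero]

end

theorem sum_Iic_ofColPartialSums_row (i j : Fin n) :
    ∑ j' ∈ Iic j, ofColPartialSums n P i j' =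
      rowPrefix P (i + 1) (j + 1) - rowPrefix P i (j + 1) := by
  unfold ofColPartialSums
  rw [Fin.sum_Iic_eq_sum_range (fun t => P (i + 1) t - P i t), sum_sub_distrib]
  rfl

theorem sum_ofColPartialSums_row (i : Fin n) :
    ∑ j, ofColPartialSums n P i j = rowPrefix P (i + 1) n - rowPrefix P i n := by
  unfold ofColPartialSums
  rw [Fin.sum_univ_eq_sum_range (fun t => P (i + 1) t - P i t), sum_sub_distrib]
  rfl

structure IsMagogColSums (n : ℕ) (P : ℕ → ℕ → ℤ) : Prop where
  zero_or_one : ∀ k < n, ∀ j < n, P (k + 1) j = 0 ∨ P (k + 1) j = 1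
  last_row : ∀ j < n, P n j = 1
  row_sum : ∀ k < n, rowPrefix P (k + 1) n = rowPrefix P k n + 1
  rowPrefix_le : ∀ k < n, ∀ j < n, rowPrefix P k (j + 1) ≤ rowPrefix P (k + 1) (j + 1)
  special : ∀ i j, i + 2 < n → j + 2 < n →
    rowPrefix P (i + 1) (j + 1) + P (i + 1) j ≤ rowPrefix P (i + 2) (j + 2)

theorem isMagog_ofColPartialSums_iff (hP0 : ∀ j, P 0 j = 0) :
    IsMagog n (ofColPartialSums n P) ↔ IsMagogColSums n P := by
  simp only [IsMagog, IsSquareSign, sum_Iic_ofColPartialSums_col hP0,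
    sum_ofColPartialSums_col hP0, sum_Iic_ofColPartialSums_row, sum_ofColPartialSums_row,
    Fin.forall_iff]
  constructor
  · rintro ⟨⟨-, hcol, hrow, hpcol, hprow⟩, hspec⟩
    refine ⟨fun k hk j hj => ?_, hcol, fun k hk => ?_, fun k hk j hj => ?_, fun i j hi hj => ?_⟩
    · have := hpcol k hk j hj; omega
    · have := hrow k hk; omega
    · have := hprow k hk j hj; omega
    · have := hspec i j hi hj
      rw [show i + 1 + 1 = i + 2 from rfl] at this
      rw [rowPrefix_succ (m := j + 1)]
      omega
  · intro hP
    refine ⟨⟨fun i hi j hj => ?_, hP.last_row, fun k hk => ?_, fun k hk j hj => ?_,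
      fun k hk j hj => ?_⟩, fun i j hi hj => ?_⟩
    · simp only [ofColPartialSums]
      have := hP.zero_or_one i hi j hj
      rcases i with _ | i
      · rw [hP0]; omega
      · have := hP.zero_or_one i (by omega) j hj; omega
    · have := hP.row_sum k hk; omega
    · have := hP.zero_or_one k hk j hj; omega
    · have := hP.rowPrefix_le k hk j hj; omega
    · have := hP.special i j hi hj
      rw [rowPrefix_succ (m := j + 1)] at this
      rw [show i + 1 + 1 = i + 2 from rfl]
      omega

end ColPartialSums

section Staircase

variable {n : ℕ} {c : ℕ → ℕ}

def stairRows (c : ℕ → ℕ) : ℕ → ℕ → ℤ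
  | 0, _ => 0
  | k + 1, j => if j < k ∨ j = c k then 1 else 0

theorem rowPrefix_stairRows_zero (m : ℕ) : rowPrefix (stairRows c) 0 m = 0 := by
  simp [rowPrefix, stairRows]

theorem rowPrefix_stairRows_succ {k : ℕ} (hk : k ≤ c k) (m : ℕ) :
    rowPrefix (stairRows c) (k + 1) m = min m k + if c k < m then 1 else 0 := by
  induction m with
  | zero => simp [rowPrefix]
  | succ m ih =>
    rw [rowPrefix_succ, ih, stairRows]
    split_ifs <;> push_cast <;> omega

theorem stairRows_congr {c' : ℕ → ℕ} (h : ∀ k < n, c k = c' k) :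
    ∀ k ≤ n, ∀ j, stairRows c k j = stairRows c' k j
  | 0, _, _ => rfl
  | k + 1, hk, j => by simp only [stairRows, h k hk]

variable (hc : ∀ k < n, k ≤ c k ∧ c k < n)
include hc

theorem isMagogColSums_stairRows (hstep : ∀ k, k + 1 < n → c (k + 1) ≤ c k + 1) :
    IsMagogColSums n (stairRows c) := by
  refine ⟨fun k hk j hj => ?_, fun j hj => ?_, fun k hk => ?_, fun k hk j hj => ?_,
    fun i j hi hj => ?_⟩
  · simp only [stairRows]
    split_ifs <;> simp
  · obtain ⟨m, rfl⟩ : ∃ m, n = m + 1 := ⟨n - 1, by omega⟩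
    have := hc m (by omega)
    rw [stairRows, if_pos (by omega)]
  · have := hc k hk
    rw [rowPrefix_stairRows_succ this.1]
    rcases k with _ | k
    · rw [rowPrefix_stairRows_zero]
      split_ifs <;> push_cast <;> omega
    · have := hc k (by omega)
      rw [rowPrefix_stairRows_succ this.1]
      split_ifs <;> push_cast <;> omega
  · have := hc k hk
    rw [rowPrefix_stairRows_succ this.1]
    rcases k with _ | k
    · rw [rowPrefix_stairRows_zero]
      positivity
    · have := hc k (by omega)
      rw [rowPrefix_stairRows_succ this.1]
      split_ifs <;> push_cast <;> omega
  · have := hc i (by omega)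
    have := hc (i + 1) (by omega)
    have := hstep i (by omega)
    rw [show i + 2 = i + 1 + 1 from rfl, rowPrefix_stairRows_succ (hc i (by omega)).1,
      rowPrefix_stairRows_succ (hc (i + 1) (by omega)).1, stairRows]
    split_ifs <;> push_cast <;> omega

theorem IsMagogColSums.stairRows_step (h : IsMagogColSums n (stairRows c)) :
    ∀ k, k + 1 < n → c (k + 1) ≤ c k + 1 := by
  intro k hk
  obtain ⟨hk₀, hk₁⟩ := hc k (by omega)
  obtain ⟨hk₂, hk₃⟩ := hc (k + 1) hk
  by_contra hlt
  have := h.special k (c k) (by omega) (by omega)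
  rw [show k + 2 = k + 1 + 1 from rfl, rowPrefix_stairRows_succ hk₀,
    rowPrefix_stairRows_succ hk₂, stairRows] at this
  split_ifs at this <;> push_cast at this <;> omega

end Staircase

namespace IsMagogColSums

variable {n : ℕ} {P : ℕ → ℕ → ℤ} (hP : IsMagogColSums n P)
include hP

theorem two_zero_eq_one (hP0 : ∀ j, P 0 j = 0)
    (hfirst : P 1 0 - P 0 0 = 1 ∨ ∃ _ : 1 < n, P 2 0 - P 1 0 = 1) (hn : 1 < n) : P 2 0 = 1 := by
  have h10 : P 1 0 = 0 ∨ P 1 0 = 1 := hP.zero_or_one 0 (by omega) 0 (by omega)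
  have h20 : P 2 0 = 0 ∨ P 2 0 = 1 := hP.zero_or_one 1 hn 0 (by omega)
  rcases hfirst with h | ⟨-, h⟩
  · rcases (show n = 2 ∨ 2 < n by omega) with rfl | h3
    · exact hP.last_row 0 (by omega)
    · have hspec : rowPrefix P 1 1 + P 1 0 ≤ rowPrefix P 2 2 := hP.special 0 0 h3 h3
      have h21 : P 2 1 = 0 ∨ P 2 1 = 1 := hP.zero_or_one 1 hn 1 hn
      simp only [rowPrefix, sum_range_succ, sum_range_zero] at hspec
      rw [hP0] at h
      omega
  · omega

theorem eq_one_of_lt (h20 : 1 < n → P 2 0 = 1) : ∀ k < n, ∀ j < k, P (k + 1) j = 1 := by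
  intro k hk
  induction k with
  | zero => omega
  | succ k ih =>
    rcases k with _ | k
    · intro j hj
      rw [show j = 0 by omega]
      exact h20 hk
    have hrow := ih (by omega)
    intro j hj
    -- the special inequality at `(k + 1, k)`: the `k + 1` leading ones of row `k + 2` force
    -- `k + 2` ones among the first `k + 2` entries of row `k + 3`
    rcases (show k + 3 = n ∨ k + 3 < n by omega) with hn | hn
    · exact hn ▸ hP.last_row j (by omega)
    have hspec : rowPrefix P (k + 2) (k + 1) + P (k + 2) k ≤ rowPrefix P (k + 3) (k + 2) :=
      hP.special (k + 1) k hn (by omega)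
    rw [rowPrefix_eq_of_eq_one hrow, hrow k (by omega)] at hspec
    refine eq_one_of_card_le_sum (s := range (k + 2)) (f := P (k + 3)) (fun t ht => ?_) ?_ j
      (mem_range.2 hj)
    · have : P (k + 3) t = 0 ∨ P (k + 3) t = 1 :=
        hP.zero_or_one (k + 2) (by omega) t (by have := mem_range.1 ht; omega)
      omega
    · rw [card_range]
      push_cast at hspec ⊢
      exact hspec

theorem rowPrefix_eq (hP0 : ∀ j, P 0 j = 0) : ∀ k ≤ n, rowPrefix P k n = k := by
  intro k hk
  induction k with
  | zero => simp [rowPrefix, hP0]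
  | succ k ih =>
    rw [hP.row_sum k hk, ih (by omega)]
    push_cast
    rfl

theorem exists_col_eq_one (hP0 : ∀ j, P 0 j = 0) (h20 : 1 < n → P 2 0 = 1) {k : ℕ}
    (hk : k < n) :
    ∃ c, k ≤ c ∧ c < n ∧ ∀ j, k ≤ j → j < n → (P (k + 1) j = 1 ↔ j = c) := by
  have htail : ∑ j ∈ Ico k n, P (k + 1) j = 1 := by
    have htot := hP.rowPrefix_eq hP0 (k + 1) hk
    rw [rowPrefix, ← sum_range_add_sum_Ico _ hk.le, ← rowPrefix,
      rowPrefix_eq_of_eq_one (hP.eq_one_of_lt h20 k hk)] at htot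
    push_cast at htot
    omega
  have hcard : #((Ico k n).filter fun j => P (k + 1) j = 1) = 1 := by
    rw [sum_congr rfl fun j hj => (show P (k + 1) j = if P (k + 1) j = 1 then 1 else 0 by
      rcases hP.zero_or_one k hk j (mem_Ico.1 hj).2 with h | h <;> simp [h]), sum_boole] at htail
    exact_mod_cast htail
  obtain ⟨c, hc⟩ := card_eq_one.1 hcard
  have hmem : ∀ j, k ≤ j ∧ j < n ∧ P (k + 1) j = 1 ↔ j = c := by
    intro j
    simpa [and_assoc] using Finset.ext_iff.1 hc j
  obtain ⟨hkc, hcn, -⟩ := (hmem c).2 rfl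
  exact ⟨c, hkc, hcn, fun j hkj hjn => by simpa [hkj, hjn] using hmem j⟩

theorem exists_stairRows (hP0 : ∀ j, P 0 j = 0) (h20 : 1 < n → P 2 0 = 1) :
    ∃ c : ℕ → ℕ, (∀ k < n, k ≤ c k ∧ c k < n) ∧ ∀ k ≤ n, ∀ j < n, P k j = stairRows c k j := by
  choose! c hkc hcn hc using fun k (hk : k < n) => hP.exists_col_eq_one hP0 h20 hk
  refine ⟨c, fun k hk => ⟨hkc k hk, hcn k hk⟩, fun k hk j hj => ?_⟩
  rcases k with _ | k
  · exact hP0 j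
  rw [stairRows]
  by_cases hjk : j < k
  · rw [if_pos (Or.inl hjk)]
    exact hP.eq_one_of_lt h20 k hk j hjk
  have hiff := hc k hk j (by omega) hj
  by_cases hjc : j = c k
  · rw [if_pos (Or.inr hjc)]
    exact hiff.2 hjc
  · rw [if_neg (by omega)]
    exact (hP.zero_or_one k hk j hj).resolve_right (mt hiff.1 hjc)

end IsMagogColSums

section StairMatrix

variable {n : ℕ} {c : ℕ → ℕ}

theorem isMagog_stairMatrix (hc : ∀ k < n, k ≤ c k ∧ c k < n)
    (hstep : ∀ k, k + 1 < n → c (k + 1) ≤ c k + 1) :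
    IsMagog n (ofColPartialSums n (stairRows c)) :=
  (isMagog_ofColPartialSums_iff fun _ => rfl).2 (isMagogColSums_stairRows hc hstep)

theorem stairMatrix_first_col (hn : 0 < n) (hc : ∀ k < n, k ≤ c k ∧ c k < n) :
    ofColPartialSums n (stairRows c) ⟨0, hn⟩ ⟨0, hn⟩ = 1 ∨
      ∃ h : 1 < n, ofColPartialSums n (stairRows c) ⟨1, h⟩ ⟨0, hn⟩ = 1 := by
  by_cases h0 : c 0 = 0
  · left
    simp [ofColPartialSums, stairRows, h0]
  · have := hc 0 hn
    exact Or.inr ⟨by omega, by simp [ofColPartialSums, stairRows, Ne.symm h0]⟩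

theorem eq_of_stairMatrix_eq {c' : ℕ → ℕ} (hc : ∀ k < n, k ≤ c k ∧ c k < n)
    (h : ofColPartialSums n (stairRows c) = ofColPartialSums n (stairRows c')) :
    ∀ k < n, c k = c' k := by
  intro k hk
  have hcol := sum_Iic_ofColPartialSums_col (P := stairRows c) (fun _ => rfl) ⟨k, hk⟩
    ⟨c k, (hc k hk).2⟩
  rw [h, sum_Iic_ofColPartialSums_col fun _ => rfl] at hcol
  have := (hc k hk).1
  simp only [stairRows, or_true, if_true] at hcol
  split_ifs at hcol <;> omega

theorem IsMagog.exists_stairMatrix {A : Fin n → Fin n → ℤ} (hA : IsMagog n A) (hn : 0 < n)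
    (hfirst : A ⟨0, hn⟩ ⟨0, hn⟩ = 1 ∨ ∃ h : 1 < n, A ⟨1, h⟩ ⟨0, hn⟩ = 1) :
    ∃ c : ℕ → ℕ, (∀ k < n, k ≤ c k ∧ c k < n) ∧ (∀ k, k + 1 < n → c (k + 1) ≤ c k + 1) ∧
      A = ofColPartialSums n (stairRows c) := by
  have hP0 := colPartialSums_zero A
  rw [← ofColPartialSums_colPartialSums A] at hA hfirst ⊢
  have hP := (isMagog_ofColPartialSums_iff hP0).1 hA
  obtain ⟨c, hc, hPc⟩ := hP.exists_stairRows hP0 (hP.two_zero_eq_one hP0 hfirst)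
  rw [ofColPartialSums_congr hPc] at hA ⊢
  exact ⟨c, hc, ((isMagog_ofColPartialSums_iff fun _ => rfl).1 hA).stairRows_step hc, rfl⟩

end StairMatrix

section BallotStair

variable {n : ℕ}

def stairOfBallot (n : ℕ) (f : ℕ → ℕ) (k : ℕ) : ℕ := k + f (n - 1 - k)

def ballotOfStair (n : ℕ) (c : ℕ → ℕ) (m : ℕ) : ℕ :=
  if m < n then c (n - 1 - m) - (n - 1 - m) else 0

theorem IsBallot.stairOfBallot_bounds {f : ℕ → ℕ} (hf : IsBallot n f) :
    ∀ k < n, k ≤ stairOfBallot n f k ∧ stairOfBallot n f k < n := by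
  intro k hk
  have := hf.2.1 (n - 1 - k) (by omega)
  exact ⟨by simp [stairOfBallot], by unfold stairOfBallot; omega⟩

theorem IsBallot.stairOfBallot_step {f : ℕ → ℕ} (hf : IsBallot n f) :
    ∀ k, k + 1 < n → stairOfBallot n f (k + 1) ≤ stairOfBallot n f k + 1 := by
  intro k hk
  have := hf.1 (show n - 1 - (k + 1) < n by omega) (show n - 1 - k < n by omega) (by omega)
  unfold stairOfBallot
  omega

theorem isBallot_ballotOfStair {c : ℕ → ℕ} (hc : ∀ k < n, k ≤ c k ∧ c k < n)
    (hstep : ∀ k, k + 1 < n → c (k + 1) ≤ c k + 1) : IsBallot n (ballotOfStair n c) := by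
  have hgrowth : ∀ b d, b + d < n → c (b + d) ≤ c b + d := by
    intro b d hbd
    induction d with
    | zero => rfl
    | succ d ih =>
      have := hstep (b + d) (by omega)
      have := ih (by omega)
      rw [← add_assoc]
      omega
  refine ⟨fun i (hi : i < n) j (hj : j < n) hij => ?_, fun k hk => ?_, fun k hk => ?_⟩
  · have := hgrowth (n - 1 - j) (j - i) (by omega)
    have := hc (n - 1 - j) (by omega)
    unfold ballotOfStair
    rw [if_pos hi, if_pos hj, show n - 1 - i = n - 1 - j + (j - i) by omega]
    omega
  · have := hc (n - 1 - k) (by omega)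
    unfold ballotOfStair
    rw [if_pos hk]
    omega
  · unfold ballotOfStair
    rw [if_neg (by omega)]

theorem stairOfBallot_ballotOfStair {c : ℕ → ℕ} (hc : ∀ k < n, k ≤ c k ∧ c k < n) :
    ∀ k < n, stairOfBallot n (ballotOfStair n c) k = c k := by
  intro k hk
  have := hc k hk
  unfold stairOfBallot ballotOfStair
  rw [if_pos (by omega), show n - 1 - (n - 1 - k) = k by omega]
  omega

theorem IsBallot.eq_of_stairOfBallot_eq {f g : ℕ → ℕ} (hf : IsBallot n f) (hg : IsBallot n g)
    (h : ∀ k < n, stairOfBallot n f k = stairOfBallot n g k) : f = g := by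
  funext m
  rcases lt_or_ge m n with hm | hm
  · have := h (n - 1 - m) (by omega)
    unfold stairOfBallot at this
    rwa [show n - 1 - (n - 1 - m) = m by omega, Nat.add_left_cancel_iff] at this
  · rw [hf.2.2 m hm, hg.2.2 m hm]

end BallotStair

/-- The number of `n × n` magog matrices whose first-column `1` lies in the
first or second row is the `n`-th Catalan number `(1/(n+1)) * C(2n, n)`. -/
theorem card_magog_first_col_top_two (n : ℕ) (hn : 0 < n) :
    Nat.card {A : Fin n → Fin n → ℤ //
        IsMagog n A ∧ (A ⟨0, hn⟩ ⟨0, hn⟩ = 1 ∨ ∃ h : 1 < n, A ⟨1, h⟩ ⟨0, hn⟩ = 1)} =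
      (2 * n).choose n / (n + 1) := by
  rw [← Nat.centralBinom_eq_two_mul_choose, ← catalan_eq_centralBinom_div, ← card_ballot]
  symm
  refine Nat.card_eq_of_bijective (fun f => ⟨ofColPartialSums n (stairRows (stairOfBallot n f.1)),
    isMagog_stairMatrix f.2.stairOfBallot_bounds f.2.stairOfBallot_step,
    stairMatrix_first_col hn f.2.stairOfBallot_bounds⟩) ⟨fun f g hfg => ?_, fun A => ?_⟩
  · exact Subtype.ext <| f.2.eq_of_stairOfBallot_eq g.2 <|
      eq_of_stairMatrix_eq f.2.stairOfBallot_bounds (congrArg Subtype.val hfg)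
  · obtain ⟨c, hc, hstep, hA⟩ := A.2.1.exists_stairMatrix hn A.2.2
    refine ⟨⟨_, isBallot_ballotOfStair hc hstep⟩, Subtype.ext ?_⟩
    rw [hA]
    exact ofColPartialSums_congr fun k hk j _ =>
      stairRows_congr (stairOfBallot_ballotOfStair hc) k hk j
end
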